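/- Suppose the q-cyclotomic coset of i_j mod N has size n for 1 ≤ j ≤ r and size δ_j < n for r+1 ≤ j ≤ s. Then for tuples V = (V_1,…,V_s) and W = (W_1,…,W_s) of F_q-linear subspaces of F_{q^n}, C_V = C_W if and only if V_j = W_j for 1 ≤ j ≤ r and Tr_{F_{q^n}/F_{q^{δ_j}}}(V_j) = Tr_{F_{q^n}/F_{q^{δ_j}}}(W_j) for r+1 ≤ j ≤ s. -/

import Mathlib

open scoped BigOperators

namespace QCSub

/-- The cyclic shift `T(u_1,…,u_N) = (u_N, u_1, …, u_{N-1})` on words of length `N`. -/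
def shift {F : Type*} {N : ℕ} (u : Fin N → F) : Fin N → F :=
  fun k => u ⟨((k : ℕ) + (N - 1)) % N, Nat.mod_lt _ k.pos⟩

/-- A code `C ⊆ F^N` is quasi-cyclic of index `ℓ` if `T^ℓ(C) = C` and `ℓ` is the
smallest positive integer with this property. -/
def IsQCOfIndex {F : Type*} {N : ℕ} (C : Set (Fin N → F)) (ℓ : ℕ) : Prop :=
  0 < ℓ ∧ shift^[ℓ] '' C = C ∧ ∀ m : ℕ, 0 < m → shift^[m] '' C = C → ℓ ≤ m

/-- The `q`-cyclotomic coset of `i` mod `N`, i.e. `{i·q^k mod N : k ≥ 0}`. -/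
def cycCoset (q N i : ℕ) : Set (ZMod N) :=
  {x | ∃ k : ℕ, x = (i : ZMod N) * (q : ZMod N) ^ k}

/-- The word `(Tr_{E/F}(β_1 α^{k i_1} + ⋯ + β_s α^{k i_s}))_{0 ≤ k ≤ N−1}`. -/
noncomputable def traceWord (F : Type*) {E : Type*} [Field F] [Field E] [Algebra F E]
    (N : ℕ) {s : ℕ} (α : E) (i : Fin s → ℕ) (β : Fin s → E) : Fin N → F :=
  fun k => Algebra.trace F E (∑ j, β j * α ^ ((k : ℕ) * i j))

/-- The (sub)code `C_V` determined by coefficient sets `V_1,…,V_s ⊆ E`. -/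
noncomputable def codeOf (F : Type*) {E : Type*} [Field F] [Field E] [Algebra F E]
    (N : ℕ) {s : ℕ} (α : E) (i : Fin s → ℕ) (V : Fin s → Set E) : Set (Fin N → F) :=
  {w | ∃ β : Fin s → E, (∀ j, β j ∈ V j) ∧ w = traceWord F N α i β}

/-- An `F`-subspace `V ⊆ E` "is a vector space over" the intermediate field `K`
if it is closed under multiplication by the elements of `K`. -/
def SpanOver {F E : Type*} [Field F] [Field E] [Algebra F E]
    (V : Submodule F E) (K : IntermediateField F E) : Prop :=
  ∀ c ∈ K, ∀ v ∈ V, c * v ∈ V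

/-- The Gaussian binomial coefficient `(m choose k)_Q`. -/
def gaussBinom (Q m k : ℕ) : ℕ :=
  (∏ t ∈ Finset.range k, (Q ^ m - Q ^ t)) / (∏ t ∈ Finset.range k, (Q ^ k - Q ^ t))

/-- `N(m, Q)`: the number of nonzero `F_Q`-subspaces of an `m`-dimensional
`F_Q`-vector space, i.e. the sum of Gaussian binomial coefficients
`Σ_{k=1}^{m} (m choose k)_Q`. -/
def numSubspaces (m Q : ℕ) : ℕ := ∑ k ∈ Finset.Icc 1 m, gaussBinom Q m k

end QCSub

open QCSub

/-!
Let `d_j` be the size of the cyclotomic coset of `i_j` and `L_j` the subfield of `F_{q^n}` with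
`q^{d_j}` elements (`F_{q^n}` itself when `d_j = n`). Since `i_j q^{d_j} ≡ i_j (mod N)`, every
power `α^{k i_j}` lies in `L_j`, so by transitivity of the trace the `k`-th coordinate of the
codeword with coefficients `β` is `∑_j Tr_{L_j/F_q}(α^{k i_j} Tr_{F_{q^n}/L_j}(β_j))`: it only
depends on the traces `T_j = Tr_{F_{q^n}/L_j}(β_j)`. Conversely, writing `Tr_{L_j/F_q}` as a sum of
Frobenius conjugates turns this coordinate into `∑_{j, t < d_j} T_j^{q^t} (α^{i_j q^t})^k`; the
`α^{i_j q^t}` are pairwise distinct because the cosets are, so Dedekind's independence of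
characters recovers every `T_j` from the codeword. Hence `C_V` is in bijection with
`∏_j Tr_{F_{q^n}/L_j}(V_j)`.
-/

open Function

theorem pow_eq_pow_iff_natCast_eq {M : Type*} [Monoid M] {x : M} {N : ℕ} (hx : orderOf x = N)
    (hN : 0 < N) {a b : ℕ} : x ^ a = x ^ b ↔ (a : ZMod N) = b := by
  rw [(orderOf_pos_iff.1 (hx ▸ hN)).pow_eq_pow_iff_modEq, hx, ZMod.natCast_eq_natCast_iff]

section FiniteFields

theorem eq_zero_of_forall_sum_mul_pow_eq_zero {ι K : Type*} [Fintype ι] [CommRing K] [IsDomain K]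
    {z : ι → K} (hz : Injective z) {a : ι → K} (h : ∀ k : ℕ, ∑ x, a x * z x ^ k = 0) :
    a = 0 := by
  -- Dedekind: the characters `k ↦ z x ^ k` of the monoid `ℕ` are linearly independent
  have hli := (linearIndependent_monoidHom (Multiplicative ℕ) K).comp (powersHom K ∘ z)
    ((powersHom K).injective.comp hz)
  funext x
  refine Fintype.linearIndependent_iff.mp hli a (funext fun k => ?_) x
  simpa [mul_comm] using h k.toAdd

theorem Module.finrank_eq_of_natCard_eq_pow {K V : Type*} [DivisionRing K] [Finite K]
    [AddCommGroup V] [Module K V] [Module.Finite K V] {d : ℕ}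
    (h : Nat.card V = Nat.card K ^ d) : Module.finrank K V = d :=
  Nat.pow_right_injective Finite.one_lt_card (Module.natCard_eq_pow_finrank.symm.trans h)

variable {F E : Type*} [Field F] [Field E] [Algebra F E] [Finite E]

theorem IntermediateField.mem_of_pow_natCard_eq (L : IntermediateField F E) {y : E}
    (hy : y ^ Nat.card L = y) : y ∈ L := by
  have := Fintype.ofFinite L
  have hfix : ∀ f : Gal(E/L), f y = y := by
    intro f
    obtain ⟨t, rfl⟩ := (FiniteField.bijective_frobeniusAlgEquivOfAlgebraic_pow L E).2 f
    rw [AlgEquiv.coe_pow]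
    refine iterate_fixed ?_ _
    rwa [FiniteField.coe_frobeniusAlgEquivOfAlgebraic, Fintype.card_eq_nat_card]
  obtain ⟨z, rfl⟩ := (IsGalois.mem_range_algebraMap_iff_fixed y).2 hfix
  exact z.2

theorem IntermediateField.trace_mul_of_mem (L : IntermediateField F E) {y : E} (hy : y ∈ L)
    (c : E) :
    Algebra.trace F E (c * y) = Algebra.trace F L (⟨y, hy⟩ * Algebra.trace L E c) := by
  rw [← Algebra.trace_trace (S := L), mul_comm, ← smul_eq_mul (a := (⟨y, hy⟩ : L)),
    ← map_smul]
  rfl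

theorem IntermediateField.algebraMap_trace_mul_of_mem (L : IntermediateField F E) {y : E}
    (hy : y ∈ L) (c : E) : algebraMap F E (Algebra.trace F E (c * y)) =
      ∑ t ∈ Finset.range (Module.finrank F L),
        ((Algebra.trace L E c : E) * y) ^ Nat.card F ^ t := by
  rw [IntermediateField.trace_mul_of_mem L hy, IsScalarTower.algebraMap_apply F L E,
    FiniteField.algebraMap_trace_eq_sum_pow, map_sum]
  simp [mul_comm]

theorem IntermediateField.trace_injective_of_natCard_eq (L : IntermediateField F E)
    (h : Nat.card L = Nat.card E) : Injective (Algebra.trace L E) := by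
  have hrank : Module.finrank L E = 1 := by
    have hcard := Module.natCard_eq_pow_finrank (K := L) (V := E)
    rw [h] at hcard
    exact (Nat.pow_eq_self_iff Finite.one_lt_card).1 hcard.symm
  intro x y hxy
  simpa [FiniteField.algebraMap_trace_eq_sum_pow, hrank] using congrArg (algebraMap L E) hxy

end FiniteFields

namespace QCSub

section Cosets

variable {q N : ℕ}

theorem cycCoset_eq_range (i : ℕ) :
    cycCoset q N i = Set.range fun k : ℕ => (i : ZMod N) * (q : ZMod N) ^ k := by
  ext x
  simp only [cycCoset, Set.mem_ofPred_eq, Set.mem_range, eq_comm]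

variable (hq : IsOfFinOrder (q : ZMod N))
include hq

theorem mem_periodicPts_mul_natCast (i : ℕ) :
    (i : ZMod N) ∈ periodicPts (· * (q : ZMod N)) :=
  ⟨orderOf (q : ZMod N), hq.orderOf_pos, by
    simp [IsPeriodicPt, IsFixedPt, pow_orderOf_eq_one]⟩

theorem ncard_cycCoset (i : ℕ) :
    (cycCoset q N i).ncard = minimalPeriod (· * (q : ZMod N)) (i : ZMod N) := by
  have hrange : cycCoset q N i = (fun k => (· * (q : ZMod N))^[k] (i : ZMod N)) ''
      Set.Iio (minimalPeriod (· * (q : ZMod N)) (i : ZMod N)) := by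
    rw [cycCoset_eq_range]
    ext x
    constructor
    · rintro ⟨k, rfl⟩
      exact ⟨k % _, Nat.mod_lt _ (minimalPeriod_pos_of_mem_periodicPts
        (mem_periodicPts_mul_natCast hq i)), by simp only [iterate_mod_minimalPeriod_eq,
          mul_right_iterate_apply]⟩
    · rintro ⟨k, -, rfl⟩
      exact ⟨k, (mul_right_iterate_apply _ _).symm⟩
  rw [hrange, iterate_injOn_Iio_minimalPeriod.ncard_image, Set.ncard_Iio_nat]

theorem ncard_cycCoset_pos (i : ℕ) : 0 < (cycCoset q N i).ncard := by
  rw [ncard_cycCoset hq]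
  exact minimalPeriod_pos_of_mem_periodicPts (mem_periodicPts_mul_natCast hq i)

theorem mul_pow_ncard_cycCoset (i : ℕ) :
    (i : ZMod N) * (q : ZMod N) ^ (cycCoset q N i).ncard = i := by
  rw [ncard_cycCoset hq, ← mul_right_iterate_apply]
  exact iterate_minimalPeriod

theorem eq_of_mul_pow_eq_mul_pow {i a b : ℕ} (ha : a < (cycCoset q N i).ncard)
    (hb : b < (cycCoset q N i).ncard)
    (h : (i : ZMod N) * (q : ZMod N) ^ a = i * (q : ZMod N) ^ b) : a = b := by
  rw [ncard_cycCoset hq] at ha hb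
  exact iterate_injOn_Iio_minimalPeriod ha hb (by simpa only [mul_right_iterate_apply])

theorem cycCoset_subset_of_mul_pow_eq {i i' a b : ℕ}
    (h : (i : ZMod N) * (q : ZMod N) ^ a = i' * (q : ZMod N) ^ b) :
    cycCoset q N i ⊆ cycCoset q N i' := by
  have hm : a * orderOf (q : ZMod N) = a + a * (orderOf (q : ZMod N) - 1) := by
    rw [Nat.mul_sub_one, Nat.add_sub_cancel' (Nat.le_mul_of_pos_right a hq.orderOf_pos)]
  have hi : (i : ZMod N) = i' * (q : ZMod N) ^ (b + a * (orderOf (q : ZMod N) - 1)) := by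
    calc (i : ZMod N) = i * (q : ZMod N) ^ (a * orderOf (q : ZMod N)) := by
          rw [pow_mul', pow_orderOf_eq_one, one_pow, mul_one]
      _ = i' * (q : ZMod N) ^ (b + a * (orderOf (q : ZMod N) - 1)) := by
          rw [hm, pow_add, ← mul_assoc, h, mul_assoc, ← pow_add]
  rintro x ⟨k, rfl⟩
  exact ⟨b + a * (orderOf (q : ZMod N) - 1) + k, by rw [hi, mul_assoc, ← pow_add]⟩

theorem cycCoset_eq_of_mul_pow_eq {i i' a b : ℕ}
    (h : (i : ZMod N) * (q : ZMod N) ^ a = i' * (q : ZMod N) ^ b) :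
    cycCoset q N i = cycCoset q N i' :=
  (cycCoset_subset_of_mul_pow_eq hq h).antisymm (cycCoset_subset_of_mul_pow_eq hq h.symm)

end Cosets

theorem traceWord_sub {F E : Type*} [Field F] [Field E] [Algebra F E] (N : ℕ) {s : ℕ} (α : E)
    (i : Fin s → ℕ) (β β' : Fin s → E) :
    traceWord F N α i (β - β') = traceWord F N α i β - traceWord F N α i β' := by
  funext k
  simp only [traceWord, Pi.sub_apply, sub_mul, Finset.sum_sub_distrib, map_sub]

section Codes

variable {F E : Type*} [Field F] [Field E] [Algebra F E] [Finite E]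
  {N s : ℕ} {α : E} {i : Fin s → ℕ} {L : Fin s → IntermediateField F E}

variable (hα : orderOf α = N) (hN : 0 < N)
include hα hN

theorem isOfFinOrder_natCard : IsOfFinOrder (Nat.card F : ZMod N) := by
  have := Fintype.ofFinite E
  have h : α ^ (Nat.card F ^ Module.finrank F E) = α ^ 1 := by
    rw [← Module.natCard_eq_pow_finrank, pow_one, ← Fintype.card_eq_nat_card,
      FiniteField.pow_card]
  rw [pow_eq_pow_iff_natCast_eq hα hN] at h
  push_cast at h
  exact isOfFinOrder_iff_pow_eq_one.2 ⟨_, Module.finrank_pos, h⟩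

theorem injective_pow_mul_pow (hi : Injective fun j => cycCoset (Nat.card F) N (i j)) :
    Injective fun x : (j : Fin s) × Fin (cycCoset (Nat.card F) N (i j)).ncard =>
      α ^ (i x.1 * Nat.card F ^ (x.2 : ℕ)) := by
  have hq := isOfFinOrder_natCard (F := F) hα hN
  rintro ⟨j, t⟩ ⟨j', t'⟩ h
  replace h : (i j : ZMod N) * (Nat.card F : ZMod N) ^ (t : ℕ) =
      i j' * (Nat.card F : ZMod N) ^ (t' : ℕ) := by
    exact_mod_cast (pow_eq_pow_iff_natCast_eq hα hN).1 h
  obtain rfl : j = j' := hi (cycCoset_eq_of_mul_pow_eq hq h)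
  obtain rfl : t = t' := Fin.ext (eq_of_mul_pow_eq_mul_pow hq t.2 t'.2 h)
  rfl

variable (hL : ∀ j, Nat.card (L j) = Nat.card F ^ (cycCoset (Nat.card F) N (i j)).ncard)
include hL

theorem pow_mul_mem (j : Fin s) (k : ℕ) : α ^ (k * i j) ∈ L j := by
  apply (L j).mem_of_pow_natCard_eq
  rw [hL j, ← pow_mul, mul_assoc, pow_eq_pow_iff_natCast_eq hα hN]
  push_cast
  rw [mul_pow_ncard_cycCoset (isOfFinOrder_natCard (F := F) hα hN)]

theorem algebraMap_trace_mul_pow_eq_sum (c : E) (j : Fin s) (k : ℕ) :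
    algebraMap F E (Algebra.trace F E (c * α ^ (k * i j))) =
      ∑ t ∈ Finset.range (cycCoset (Nat.card F) N (i j)).ncard,
        (Algebra.trace (L j) E c : E) ^ Nat.card F ^ t * (α ^ (i j * Nat.card F ^ t)) ^ k := by
  have := Finite.of_injective _ (algebraMap F E).injective
  rw [(L j).algebraMap_trace_mul_of_mem (pow_mul_mem hα hN hL j k),
    Module.finrank_eq_of_natCard_eq_pow (hL j)]
  refine Finset.sum_congr rfl fun t _ => ?_
  rw [mul_pow, ← pow_mul, ← pow_mul]
  ring_nf

theorem traceWord_eq_zero_iff (hi : Injective fun j => cycCoset (Nat.card F) N (i j))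
    (c : Fin s → E) : traceWord F N α i c = 0 ↔ ∀ j, Algebra.trace (L j) E (c j) = 0 := by
  constructor
  · intro h j
    have hsum : ∀ k : ℕ, ∑ x : (j : Fin s) × Fin (cycCoset (Nat.card F) N (i j)).ncard,
        (Algebra.trace (L x.1) E (c x.1) : E) ^ Nat.card F ^ (x.2 : ℕ) *
          (α ^ (i x.1 * Nat.card F ^ (x.2 : ℕ))) ^ k = 0 := by
      intro k
      have hper : ∀ j, α ^ (k % N * i j) = α ^ (k * i j) := fun j => by
        rw [pow_mul, pow_mul, ← hα, pow_mod_orderOf]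
      have hk : ∑ j, Algebra.trace F E (c j * α ^ (k * i j)) = 0 := by
        simpa only [traceWord, map_sum, hper, Pi.zero_apply] using
          congrFun h ⟨k % N, Nat.mod_lt k hN⟩
      rw [← Finset.univ_sigma_univ, Finset.sum_sigma]
      simpa [algebraMap_trace_mul_pow_eq_sum hα hN hL, Finset.sum_range] using
        congrArg (algebraMap F E) hk
    have hpos := ncard_cycCoset_pos (isOfFinOrder_natCard (F := F) hα hN) (i j)
    simpa using congrFun (eq_zero_of_forall_sum_mul_pow_eq_zero
      (injective_pow_mul_pow hα hN hi) hsum) ⟨j, 0, hpos⟩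
  · intro h
    funext k
    simp [traceWord, map_sum, (L _).trace_mul_of_mem (pow_mul_mem hα hN hL _ _), h]

theorem traceWord_eq_traceWord_iff (hi : Injective fun j => cycCoset (Nat.card F) N (i j))
    (β β' : Fin s → E) : traceWord F N α i β = traceWord F N α i β' ↔
      ∀ j, Algebra.trace (L j) E (β j) = Algebra.trace (L j) E (β' j) := by
  rw [← sub_eq_zero, ← traceWord_sub, traceWord_eq_zero_iff hα hN hL hi]
  simp only [Pi.sub_apply, map_sub, sub_eq_zero]

theorem codeOf_subset_codeOf_iff (hi : Injective fun j => cycCoset (Nat.card F) N (i j))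
    (V W : Fin s → Submodule F E) :
    codeOf F N α i (fun j => (V j : Set E)) ⊆ codeOf F N α i (fun j => (W j : Set E)) ↔
      ∀ j, Algebra.trace (L j) E '' (V j : Set E) ⊆ Algebra.trace (L j) E '' (W j : Set E) := by
  constructor
  · rintro h j _ ⟨v, hv, rfl⟩
    have hsingle : ∀ j', (Pi.single j v : Fin s → E) j' ∈ (V j' : Set E) := by
      intro j'
      rcases eq_or_ne j' j with rfl | hne
      · simpa using hv
      · simp [hne]
    obtain ⟨β', hβ', hword⟩ := h ⟨Pi.single j v, hsingle, rfl⟩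
    refine ⟨β' j, hβ' j, ?_⟩
    simpa using ((traceWord_eq_traceWord_iff hα hN hL hi _ _).1 hword j).symm
  · rintro h _ ⟨β, hβ, rfl⟩
    choose β' hβ' htr using fun j => h j ⟨β j, hβ j, rfl⟩
    exact ⟨β', hβ', (traceWord_eq_traceWord_iff hα hN hL hi _ _).2 fun j => (htr j).symm⟩

theorem codeOf_eq_codeOf_iff (hi : Injective fun j => cycCoset (Nat.card F) N (i j))
    (V W : Fin s → Submodule F E) :
    codeOf F N α i (fun j => (V j : Set E)) = codeOf F N α i (fun j => (W j : Set E)) ↔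
      ∀ j, Algebra.trace (L j) E '' (V j : Set E) = Algebra.trace (L j) E '' (W j : Set E) := by
  simp only [Set.Subset.antisymm_iff, codeOf_subset_codeOf_iff hα hN hL hi, forall_and]

end Codes

end QCSub

theorem codeOf_eq_iff_mixed_cosets_general
    (p e q n N : ℕ) [Fact p.Prime] (hq : q = p ^ e)
    (hN : N = q ^ n - 1)
    (F E : Type*) [Field F] [Field E] [Algebra F E]
    (hF : Nat.card F = q) (hE : Nat.card E = q ^ n)
    (α : E) (hα : orderOf α = q ^ n - 1)
    (s : ℕ) (i : Fin s → ℕ)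
    (hdist : ∀ j j' : Fin s, j ≠ j' → cycCoset q N (i j) ≠ cycCoset q N (i j'))
    (r : ℕ) (δ : Fin s → ℕ)
    (hfull : ∀ j : Fin s, (j : ℕ) < r → (cycCoset q N (i j)).ncard = n)
    (hsmall : ∀ j : Fin s, r ≤ (j : ℕ) →
      (cycCoset q N (i j)).ncard = δ j ∧ δ j < n)
    (K : Fin s → IntermediateField F E)
    (hK : ∀ j : Fin s, r ≤ (j : ℕ) → Nat.card (K j) = q ^ δ j)
    (V W : Fin s → Submodule F E) :
    codeOf F N α i (fun j => (V j : Set E)) = codeOf F N α i (fun j => (W j : Set E)) ↔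
      ((∀ j : Fin s, (j : ℕ) < r → V j = W j) ∧
        ∀ j : Fin s, r ≤ (j : ℕ) →
          Algebra.trace (K j) E '' (V j : Set E) = Algebra.trace (K j) E '' (W j : Set E)) := by
  subst hF
  have : Finite E := Nat.finite_of_card_ne_zero <| by
    rw [hE, hq]
    exact pow_ne_zero _ (pow_ne_zero _ (Fact.out : p.Prime).ne_zero)
  have hN0 : 0 < N := by
    have := Finite.one_lt_card (α := E)
    omega
  -- for `j < r` the coset is full and `F_{q^n}` itself plays the role of the subfield
  let L : Fin s → IntermediateField F E := fun j => if (j : ℕ) < r then ⊤ else K j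
  have hL : ∀ j, Nat.card (L j) = Nat.card F ^ (cycCoset (Nat.card F) N (i j)).ncard := by
    intro j
    by_cases hj : (j : ℕ) < r
    · simp [L, hj, hfull j hj, ← hE]
    · simp [L, hj, hK j (not_lt.1 hj), (hsmall j (not_lt.1 hj)).1]
  have hcases : ∀ j, Algebra.trace (L j) E '' (V j : Set E) = Algebra.trace (L j) E '' (W j) ↔
      ((j : ℕ) < r → V j = W j) ∧ (r ≤ (j : ℕ) →
        Algebra.trace (K j) E '' (V j : Set E) = Algebra.trace (K j) E '' (W j : Set E)) := by
    intro j
    by_cases hj : (j : ℕ) < r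
    · have hLE : Nat.card (L j) = Nat.card E := by rw [hL j, hfull j hj, hE]
      simp [hj, ((L j).trace_injective_of_natCard_eq hLE).image_injective.eq_iff]
    · have hLK : L j = K j := if_neg hj
      rw [hLK]
      simp [hj, not_lt.1 hj]
  rw [codeOf_eq_codeOf_iff (hα.trans hN.symm) hN0 hL fun j j' => not_imp_not.1 (hdist j j')]
  simp only [hcases, forall_and]

/-- Remark after Theorem `enum-main`. If the `q`-cyclotomic coset of
`i_j` has size `n` for `j ≤ r` and size `δ_j < n` for `j > r`, then `C_V = C_W` iff
`V_j = W_j` for `j ≤ r` and `Tr_{F_{q^n}/F_{q^{δ_j}}}(V_j) = Tr_{F_{q^n}/F_{q^{δ_j}}}(W_j)`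
for `j > r`. -/
theorem codeOf_eq_iff_mixed_cosets
    (p e q n N : ℕ) [Fact p.Prime] (he : 0 < e) (hq : q = p ^ e) (hn : 0 < n)
    (hN : N = q ^ n - 1)
    (F E : Type*) [Field F] [Field E] [Algebra F E]
    (hF : Nat.card F = q) (hE : Nat.card E = q ^ n)
    (α : E) (hα : orderOf α = q ^ n - 1)
    (s : ℕ) (i : Fin s → ℕ) (hi : ∀ j, 1 ≤ i j)
    (hdist : ∀ j j' : Fin s, j ≠ j' → cycCoset q N (i j) ≠ cycCoset q N (i j'))
    (r : ℕ) (hr : r ≤ s) (δ : Fin s → ℕ)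
    (hfull : ∀ j : Fin s, (j : ℕ) < r → (cycCoset q N (i j)).ncard = n)
    (hsmall : ∀ j : Fin s, r ≤ (j : ℕ) →
      (cycCoset q N (i j)).ncard = δ j ∧ δ j < n)
    (hδn : ∀ j, δ j ∣ n)
    (K : Fin s → IntermediateField F E)
    (hK : ∀ j : Fin s, r ≤ (j : ℕ) → Nat.card (K j) = q ^ δ j)
    (V W : Fin s → Submodule F E) :
    codeOf F N α i (fun j => (V j : Set E)) = codeOf F N α i (fun j => (W j : Set E)) ↔
      ((∀ j : Fin s, (j : ℕ) < r → V j = W j) ∧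
        ∀ j : Fin s, r ≤ (j : ℕ) →
          Algebra.trace (K j) E '' (V j : Set E) = Algebra.trace (K j) E '' (W j : Set E)) :=
  codeOf_eq_iff_mixed_cosets_general p e q n N hq hN F E hF hE α hα s i hdist r δ hfull hsmall K hK
    V W
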